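/- Let ρ be a positive semidefinite trace-class operator with trace 1 on a Hilbert space, with eigenvalues λ₁ ≥ λ₂ ≥ … in decreasing order. For any state ρ_r of rank r, the tail of the eigenvalues satisfies Σ_{j>r} λⱼ ≤ (1/2)‖ρ − ρ_r‖₁. -/

import Mathlib

/-!
Let `P` be the projection onto the support of `ρr`, so that `Tr P = rank ρr ≤ r` and
`(1 - P) ρr = 0`. By Ky Fan's maximum principle `Tr (P ρ) ≤ λ₀ + ⋯ + λ_{r-1}`, hence the tail is
at most `Tr ((1 - P) ρ) = Tr ((1 - P) (ρ - ρr))`. As `0 ≤ 1 - P ≤ 1` and `ρ - ρr` is traceless,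
this is at most the sum of the positive eigenvalues of `ρ - ρr`, which is `½ ‖ρ - ρr‖₁`.
-/

open Matrix ComplexOrder

/-- The trace norm `‖A‖₁ = Tr √(AᴴA)` of a complex matrix. -/
noncomputable def traceNorm {ι : Type*} [Fintype ι] [DecidableEq ι] (A : Matrix ι ι ℂ) : ℝ :=
  ((Matrix.posSemidef_conjTranspose_mul_self A).isHermitian.eigenvectorUnitary.1 *
    diagonal (((↑) : ℝ → ℂ) ∘ (√·) ∘ (Matrix.posSemidef_conjTranspose_mul_self A).isHermitian.eigenvalues) *
    (star (Matrix.posSemidef_conjTranspose_mul_self A).isHermitian.eigenvectorUnitary :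
      Matrix ι ι ℂ)).trace.re

open scoped MatrixOrder

lemma Finset.sum_mul_le_sum_of_threshold {ι : Type*} [Fintype ι]
    {lam c : ι → ℝ} {s : Finset ι} {t : ℝ} (ht : 0 ≤ t)
    (hs : ∀ j ∈ s, t ≤ lam j) (hsc : ∀ j ∉ s, lam j ≤ t)
    (hc0 : ∀ j, 0 ≤ c j) (hc1 : ∀ j, c j ≤ 1) (hsum : ∑ j, c j ≤ s.card) :
    ∑ j, lam j * c j ≤ ∑ j ∈ s, lam j := by
  classical
  calc ∑ j, lam j * c j
      ≤ ∑ j, ((if j ∈ s then lam j else 0) + t * (c j - if j ∈ s then 1 else 0)) := by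
        refine Finset.sum_le_sum fun j _ => ?_
        split_ifs with hj
        · nlinarith [hs j hj, hc1 j]
        · nlinarith [hsc j hj, hc0 j]
    _ = ∑ j ∈ s, lam j + t * (∑ j, c j - s.card) := by
        rw [Finset.sum_add_distrib, ← Finset.mul_sum, Finset.sum_sub_distrib,
          Finset.sum_ite_mem, Finset.sum_boole]
        simp
    _ ≤ ∑ j ∈ s, lam j := by nlinarith

lemma Fin.sum_mul_le_sum_head {d r : ℕ} (hr : r < d) {lam c : Fin d → ℝ} (hlam : Antitone lam)
    (hlam0 : ∀ j, 0 ≤ lam j) (hc0 : ∀ j, 0 ≤ c j) (hc1 : ∀ j, c j ≤ 1) (hsum : ∑ j, c j ≤ r) :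
    ∑ j, lam j * c j ≤ ∑ j ∈ Finset.univ.filter (fun j : Fin d => (j : ℕ) < r), lam j := by
  refine Finset.sum_mul_le_sum_of_threshold (t := lam ⟨r, hr⟩) (hlam0 _) ?_ ?_ hc0 hc1 ?_
  · intro j hj
    exact hlam (Fin.le_def.mpr (by simpa using hj : (j : ℕ) < r).le)
  · intro j hj
    exact hlam (Fin.le_def.mpr (not_lt.mp (by simpa using hj)))
  · rwa [Fin.card_filter_val_lt, min_eq_right hr.le]

namespace Matrix

variable {𝕜 n : Type*} [RCLike 𝕜] [Fintype n] [DecidableEq n]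

omit [Fintype n] [DecidableEq n] in
lemma re_diag_nonneg_of_nonneg {B : Matrix n n 𝕜} (hB : 0 ≤ B) (i : n) : 0 ≤ RCLike.re (B i i) :=
  (RCLike.nonneg_iff.mp (nonneg_iff_posSemidef.mp hB).diag_nonneg).1

lemma re_diag_star_mul_mul_mem_Icc {Q U : Matrix n n 𝕜} (hQ0 : 0 ≤ Q) (hQ1 : Q ≤ 1)
    (hU : U ∈ unitaryGroup n 𝕜) (i : n) : RCLike.re ((star U * Q * U) i i) ∈ Set.Icc 0 1 := by
  refine ⟨re_diag_nonneg_of_nonneg (star_left_conjugate_nonneg hQ0 U) i, ?_⟩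
  have h := re_diag_nonneg_of_nonneg (sub_nonneg.mpr (star_left_conjugate_le_conjugate hQ1 U)) i
  rw [mul_one, mem_unitaryGroup_iff'.mp hU] at h
  simpa using h

lemma sum_diag_star_mul_mul {U : Matrix n n 𝕜} (hU : U ∈ unitaryGroup n 𝕜) (Q : Matrix n n 𝕜) :
    ∑ i, (star U * Q * U) i i = Q.trace := by
  change (star U * Q * U).trace = _
  rw [trace_mul_cycle, mem_unitaryGroup_iff.mp hU, one_mul]

namespace IsHermitian

variable {A : Matrix n n 𝕜} (hA : A.IsHermitian)
include hA

lemma trace_mul_cfc (Q : Matrix n n 𝕜) (f : ℝ → ℝ) :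
    (Q * cfc f A).trace = ∑ i, (f (hA.eigenvalues i) : 𝕜) *
      (star (hA.eigenvectorUnitary : Matrix n n 𝕜) * Q * hA.eigenvectorUnitary) i i := by
  rw [hA.cfc_eq, IsHermitian.cfc, Unitary.conjStarAlgAut_apply, ← mul_assoc, ← mul_assoc,
    trace_mul_cycle, ← mul_assoc]
  simp only [trace, diag_apply, mul_diagonal, Function.comp_apply, mul_comm]

lemma trace_cfc (f : ℝ → ℝ) : (cfc f A).trace = ∑ i, (f (hA.eigenvalues i) : 𝕜) := by
  simpa [mem_unitaryGroup_iff'.mp hA.eigenvectorUnitary.2] using hA.trace_mul_cfc 1 f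

lemma re_trace_mul (Q : Matrix n n 𝕜) :
    RCLike.re (Q * A).trace = ∑ i, hA.eigenvalues i *
      RCLike.re ((star (hA.eigenvectorUnitary : Matrix n n 𝕜) * Q * hA.eigenvectorUnitary) i i) := by
  conv_lhs => rw [← cfc_id ℝ A, hA.trace_mul_cfc, map_sum]
  simp

lemma exists_support_projection :
    ∃ P : Matrix n n 𝕜, 0 ≤ P ∧ P ≤ 1 ∧ P * A = A ∧ P.trace = A.rank := by
  let f : ℝ → ℝ := fun x => if x = 0 then 0 else 1
  have hf01 (x : ℝ) : f x ≤ 1 := by by_cases hx : x = 0 <;> simp [f, hx]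
  refine ⟨cfc f A, cfc_nonneg fun x _ => by positivity, cfc_le_one f A fun x _ => hf01 x, ?_, ?_⟩
  · calc cfc f A * A = cfc f A * cfc id A := by rw [cfc_id ℝ A]
      _ = cfc (fun x => f x * id x) A :=
        (cfc_mul f id A (A.finite_real_spectrum.continuousOn f)).symm
      _ = cfc id A := cfc_congr fun x _ => by by_cases hx : x = 0 <;> simp [f, hx]
      _ = A := cfc_id ℝ A
  · rw [hA.trace_cfc, hA.rank_eq_card_non_zero_eigs, Fintype.card_subtype]
    simp [f, apply_ite, Finset.card_filter, ite_not]

lemma sum_eigenvalues_eq_re_trace : ∑ i, hA.eigenvalues i = RCLike.re A.trace := by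
  simp [hA.trace_eq_sum_eigenvalues]

end IsHermitian

end Matrix

lemma Matrix.IsHermitian.traceNorm_eq_sum_abs_eigenvalues {n : Type*} [Fintype n] [DecidableEq n]
    {A : Matrix n n ℂ} (hA : A.IsHermitian) :
    traceNorm A = ∑ i, |hA.eigenvalues i| := by
  have hsq : Aᴴ * A = cfc (fun x : ℝ => x * x) A := by
    rw [cfc_mul (fun x : ℝ => x) (fun x : ℝ => x) A, cfc_id' ℝ A, hA.eq]
  calc traceNorm A = (cfc Real.sqrt (Aᴴ * A)).trace.re := by
        rw [(posSemidef_conjTranspose_mul_self A).isHermitian.cfc_eq]; rfl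
    _ = (cfc (fun x => |x|) A).trace.re := by
        rw [hsq, ← cfc_comp' Real.sqrt (fun x : ℝ => x * x) A]
        simp only [Real.sqrt_mul_self_eq_abs]
        rfl
    _ = ∑ i, |hA.eigenvalues i| := by rw [hA.trace_cfc]; simp

lemma Matrix.IsHermitian.re_trace_mul_le_half_traceNorm {n : Type*} [Fintype n] [DecidableEq n]
    {A Q : Matrix n n ℂ} (hA : A.IsHermitian) (hA0 : A.trace = 0) (hQ0 : 0 ≤ Q) (hQ1 : Q ≤ 1) :
    (Q * A).trace.re ≤ 1 / 2 * traceNorm A := by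
  have hsum : ∑ i, hA.eigenvalues i = 0 := by simp [hA.sum_eigenvalues_eq_re_trace, hA0]
  rw [← RCLike.re_to_complex, hA.re_trace_mul, hA.traceNorm_eq_sum_abs_eigenvalues]
  calc _ ≤ ∑ i, (|hA.eigenvalues i| + hA.eigenvalues i) / 2 := by
        refine Finset.sum_le_sum fun i _ => ?_
        obtain ⟨hc0, hc1⟩ := re_diag_star_mul_mul_mem_Icc hQ0 hQ1 hA.eigenvectorUnitary.2 i
        cases abs_cases (hA.eigenvalues i) <;> nlinarith
    _ = 1 / 2 * ∑ i, |hA.eigenvalues i| := by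
        rw [← Finset.sum_div, Finset.sum_add_distrib, hsum]
        ring

lemma Matrix.PosSemidef.re_trace_mul_le_sum_head {𝕜 : Type*} [RCLike 𝕜] {d r : ℕ} (hr : r < d)
    {ρ Q : Matrix (Fin d) (Fin d) 𝕜} (hρ : ρ.PosSemidef) {lam : Fin d → ℝ} (hlam : Antitone lam)
    (hperm : ∃ σ : Equiv.Perm (Fin d), ∀ j, lam j = hρ.isHermitian.eigenvalues (σ j))
    (hQ0 : 0 ≤ Q) (hQ1 : Q ≤ 1) (hQr : RCLike.re Q.trace ≤ r) :
    RCLike.re (Q * ρ).trace ≤ ∑ j ∈ Finset.univ.filter (fun j : Fin d => (j : ℕ) < r), lam j := by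
  obtain ⟨σ, hσ⟩ := hperm
  set U : Matrix (Fin d) (Fin d) 𝕜 := hρ.isHermitian.eigenvectorUnitary.1
  have hU : U ∈ unitaryGroup (Fin d) 𝕜 := hρ.isHermitian.eigenvectorUnitary.2
  set c : Fin d → ℝ := fun j => RCLike.re ((star U * Q * U) (σ j) (σ j))
  have hc (j : Fin d) : c j ∈ Set.Icc 0 1 := re_diag_star_mul_mul_mem_Icc hQ0 hQ1 hU (σ j)
  have hcsum : ∑ j, c j ≤ r := by
    rwa [Equiv.sum_comp σ (fun k => RCLike.re ((star U * Q * U) k k)), ← map_sum,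
      sum_diag_star_mul_mul hU]
  rw [hρ.isHermitian.re_trace_mul, ← Equiv.sum_comp σ]
  simp_rw [← hσ]
  exact Fin.sum_mul_le_sum_head hr hlam (fun j => hσ j ▸ hρ.eigenvalues_nonneg _)
    (fun j => (hc j).1) (fun j => (hc j).2) hcsum

/-- Let `ρ` be a state (PSD, trace `1`) with eigenvalues `lam 0 ≥ lam 1 ≥ …` listed in
decreasing order.  For any state `ρᵣ` of rank at most `r`, the eigenvalue tail satisfies
`∑_{j ≥ r} lam j ≤ (1/2) ‖ρ − ρᵣ‖₁`. -/
theorem eigenvalue_tail_le_traceDist (d : ℕ) (ρ : Matrix (Fin d) (Fin d) ℂ)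
    (hρ : ρ.PosSemidef) (htr : ρ.trace = 1)
    (lam : Fin d → ℝ) (hdecr : Antitone lam)
    (hperm : ∃ σ : Equiv.Perm (Fin d), ∀ j, lam j = hρ.isHermitian.eigenvalues (σ j))
    (r : ℕ) (ρr : Matrix (Fin d) (Fin d) ℂ)
    (hρr : ρr.PosSemidef) (htrr : ρr.trace = 1) (hrank : ρr.rank ≤ r) :
    ∑ j ∈ Finset.univ.filter (fun j : Fin d => r ≤ (j : ℕ)), lam j ≤
      (1 / 2) * traceNorm (ρ - ρr) := by
  have hΔ : (ρ - ρr).IsHermitian := hρ.isHermitian.sub hρr.isHermitian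
  rcases le_or_gt d r with hdr | hrd
  · have hempty : Finset.univ.filter (fun j : Fin d => r ≤ (j : ℕ)) = ∅ :=
      Finset.filter_false_of_mem fun j _ => by omega
    rw [hempty, Finset.sum_empty, hΔ.traceNorm_eq_sum_abs_eigenvalues]
    positivity
  obtain ⟨P, hP0, hP1, hPρr, hPtr⟩ := hρr.isHermitian.exists_support_projection
  have hhead := hρ.re_trace_mul_le_sum_head hrd hdecr hperm hP0 hP1
    (by simpa [hPtr] using hrank)
  rw [RCLike.re_to_complex] at hhead
  have hsum : ∑ j, lam j = 1 := by
    obtain ⟨σ, hσ⟩ := hperm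
    simp_rw [hσ, Equiv.sum_comp σ hρ.isHermitian.eigenvalues,
      hρ.isHermitian.sum_eigenvalues_eq_re_trace, htr]
    simp
  have hsplit := Finset.sum_filter_add_sum_filter_not Finset.univ (fun j : Fin d => r ≤ (j : ℕ)) lam
  simp only [not_le] at hsplit
  have hcompl : ((1 - P) * (ρ - ρr)).trace.re = 1 - (P * ρ).trace.re := by
    rw [sub_mul, one_mul, mul_sub, hPρr, sub_sub_sub_cancel_right, trace_sub, htr]
    simp
  have hbound := hΔ.re_trace_mul_le_half_traceNorm (by rw [trace_sub, htr, htrr, sub_self])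
    (sub_nonneg.mpr hP1) (sub_le_self 1 hP0)
  linarith
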